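/- Let G be a connected weighted graph, (A, V\A) an unweighted cut of neighbourhood diversity at most k, and H_A the gadget graph built from G[A] by adding vertices b_{ij} as in the distance-preserver construction. Then for every A' ⊆ A, if A' is a k-module of G then A' is a k-module of H_A. -/

import Mathlib

open scoped Classical

variable {V : Type*}

/-- `M` is a `k`-module of the graph `H`: it can be partitioned into (at most) `k` parts
such that within each part all vertices have identical neighbourhoods outside `M`. -/
def IsKModule {α : Type*} (H : SimpleGraph α) (k : ℕ) (M : Set α) : Prop :=
  ∃ P : Fin k → Set α, (⋃ i, P i) = M ∧
    (∀ i j, i ≠ j → Disjoint (P i) (P j)) ∧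
    ∀ i, ∀ u ∈ P i, ∀ v ∈ P i, ∀ x ∉ M, (H.Adj u x ↔ H.Adj v x)

/-- The underlying relation of the gadget graph `H_A` (Definition 4.2): on `G[A]`
(the other vertices of `V` are kept as isolated junk vertices) we add fresh vertices
`b_{ij} = inr (i,j)` for the parts `A_i` with `B_i ≠ ∅`; each `b_{ij}` is joined to all
of `A_i`, and `b_{ij}` is joined to `b_{ji}` for `i ≠ j`. -/
def gadgetRelA {k : ℕ} (G : SimpleGraph V) (A : Set V) (Apart B : Fin k → Set V) :
    (V ⊕ Fin k × Fin k) → (V ⊕ Fin k × Fin k) → Prop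
  | Sum.inl u, Sum.inl v => u ∈ A ∧ v ∈ A ∧ G.Adj u v
  | Sum.inl u, Sum.inr (i, _) => u ∈ Apart i ∧ (B i).Nonempty
  | Sum.inr (i, j), Sum.inr (i', j') =>
      i' = j ∧ j' = i ∧ i ≠ j ∧ (B i).Nonempty ∧ (B j).Nonempty
  | _, _ => False

/-- The gadget graph `H_A` of Definition 4.2. -/
def gadgetA {k : ℕ} (G : SimpleGraph V) (A : Set V) (Apart B : Fin k → Set V) :
    SimpleGraph (V ⊕ Fin k × Fin k) :=
  SimpleGraph.fromRel (gadgetRelA G A Apart B)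

/-! Two vertices of `A'` in the same part of a `k`-partition witnessing that `A'` is a `k`-module
of `G` see the same vertices outside `A ⊇ A'`; by minimality of the partition `A_1, …, A_k` they
therefore lie in the same part `A_j`. In `H_A` the neighbours of a vertex `u ∈ A` outside `A'` are
its `G`-neighbours in `A \ A'` together with the gadget vertices `b_{jl}` of its part `A_j`, so
the same partition of `A'` witnesses that `A'` is a `k`-module of `H_A`. -/

theorem isKModule_image {α β : Type*} {H : SimpleGraph β} {k : ℕ} {M : Set α} {f : α → β}
    (hf : Function.Injective f) (P : Fin k → Set α) (hcover : ⋃ i, P i = M)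
    (hdisj : ∀ i j, i ≠ j → Disjoint (P i) (P j))
    (hadj : ∀ i, ∀ u ∈ P i, ∀ v ∈ P i, ∀ x ∉ f '' M, H.Adj (f u) x ↔ H.Adj (f v) x) :
    IsKModule H k (f '' M) :=
  ⟨fun i => f '' P i, by rw [← Set.image_iUnion, hcover],
    fun i j hij => Set.disjoint_image_of_injective hf (hdisj i j hij),
    by rintro i _ ⟨u, hu, rfl⟩ _ ⟨v, hv, rfl⟩ x hx; exact hadj i u hu v hv x hx⟩

section Gadget

variable {k : ℕ} {G : SimpleGraph V} {A : Set V} {Apart B : Fin k → Set V}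

theorem mem_part_of_adj_iff_outside (hcover : ⋃ i, Apart i = A)
    (hmod : ∀ i, ∀ u ∈ Apart i, ∀ v ∈ Apart i, ∀ x ∉ A, (G.Adj u x ↔ G.Adj v x))
    (hmin : ∀ i j, i ≠ j →
      ∃ u ∈ Apart i, ∃ v ∈ Apart j, ∃ x ∉ A, ¬ (G.Adj u x ↔ G.Adj v x))
    {u v : V} (hv : v ∈ A) (huv : ∀ x ∉ A, G.Adj u x ↔ G.Adj v x) {j : Fin k}
    (hu : u ∈ Apart j) : v ∈ Apart j := by
  obtain ⟨j', hv'⟩ := Set.mem_iUnion.mp (hcover ▸ hv)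
  by_contra hvj
  have hjj' : j ≠ j' := fun h => hvj (h ▸ hv')
  obtain ⟨u', hu', v', hv'', x, hx, hdiff⟩ := hmin j j' hjj'
  exact hdiff ((hmod j u' hu' u hu x hx).trans ((huv x hx).trans (hmod j' v hv' v' hv'' x hx)))

@[simp]
theorem gadgetA_adj_inl_inl {u w : V} :
    (gadgetA G A Apart B).Adj (.inl u) (.inl w) ↔ u ∈ A ∧ w ∈ A ∧ G.Adj u w := by
  simp only [gadgetA, SimpleGraph.fromRel_adj, gadgetRelA, ne_eq, Sum.inl.injEq]
  constructor
  · rintro ⟨-, h | ⟨hw, hu, h⟩⟩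
    exacts [h, ⟨hu, hw, h.symm⟩]
  · rintro h
    exact ⟨h.2.2.ne, Or.inl h⟩

@[simp]
theorem gadgetA_adj_inl_inr {u : V} {i j : Fin k} :
    (gadgetA G A Apart B).Adj (.inl u) (.inr (i, j)) ↔ u ∈ Apart i ∧ (B i).Nonempty := by
  simp [gadgetA, gadgetRelA]

theorem gadgetA_adj_inl_iff_of_adj_iff {S : Set V} {u v : V} (hu : u ∈ A) (hv : v ∈ A)
    (huv : ∀ w ∉ S, G.Adj u w ↔ G.Adj v w) (hpart : ∀ j, u ∈ Apart j ↔ v ∈ Apart j) :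
    ∀ x ∉ Sum.inl '' S,
      (gadgetA G A Apart B).Adj (.inl u) x ↔ (gadgetA G A Apart B).Adj (.inl v) x := by
  rintro (w | ⟨i, j⟩) hx
  · have hw : w ∉ S := fun h => hx ⟨w, h, rfl⟩
    simp only [gadgetA_adj_inl_inl, hu, hv, true_and, huv w hw]
  · simp only [gadgetA_adj_inl_inr, hpart i]

end Gadget

theorem gadgetA_preserves_kmodules_general (G : SimpleGraph V)
    (A : Set V) (k : ℕ) (Apart : Fin k → Set V)
    (hcover : (⋃ i, Apart i) = A)
    (hmod : ∀ i, ∀ u ∈ Apart i, ∀ v ∈ Apart i, ∀ x ∉ A, (G.Adj u x ↔ G.Adj v x))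
    (hmin : ∀ i j, i ≠ j →
      ∃ u ∈ Apart i, ∃ v ∈ Apart j, ∃ x ∉ A, ¬ (G.Adj u x ↔ G.Adj v x))
    (B : Fin k → Set V)
    (A' : Set V) (hA' : A' ⊆ A) (hmodA' : IsKModule G k A') :
    IsKModule (gadgetA G A Apart B) k (Sum.inl '' A') := by
  obtain ⟨P, hPcover, hPdisj, hPmod⟩ := hmodA'
  refine isKModule_image Sum.inl_injective P hPcover hPdisj fun i u hu v hv => ?_
  have hmemA : ∀ {w}, w ∈ P i → w ∈ A := fun hw => hA' (hPcover ▸ Set.mem_iUnion_of_mem i hw)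
  have houtside : ∀ x ∉ A, G.Adj u x ↔ G.Adj v x :=
    fun x hx => hPmod i u hu v hv x fun h => hx (hA' h)
  refine gadgetA_adj_inl_iff_of_adj_iff (hmemA hu) (hmemA hv) (hPmod i u hu v hv) fun j => ?_
  exact ⟨mem_part_of_adj_iff_outside hcover hmod hmin (hmemA hv) houtside,
    mem_part_of_adj_iff_outside hcover hmod hmin (hmemA hu) fun x hx => (houtside x hx).symm⟩

/-- **Lemma 4.5 (1).** Let `(A, V \ A)` be an unweighted cut of neighbourhood diversity
at most `k` of a connected graph `G`, with minimal partition `A_1, …, A_k` of `A`, and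
let `H_A` be the gadget graph of Definition 4.2.  Then for every `A' ⊆ A`, if `A'` is a
`k`-module of `G` then (its copy) is a `k`-module of `H_A`. -/
theorem gadgetA_preserves_kmodules [Fintype V] (G : SimpleGraph V) (hG : G.Connected)
    (A : Set V) (k : ℕ) (Apart : Fin k → Set V)
    (hcover : (⋃ i, Apart i) = A)
    (hne : ∀ i, (Apart i).Nonempty)
    (hdisj : ∀ i j, i ≠ j → Disjoint (Apart i) (Apart j))
    (hmod : ∀ i, ∀ u ∈ Apart i, ∀ v ∈ Apart i, ∀ x ∉ A, (G.Adj u x ↔ G.Adj v x))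
    (hmin : ∀ i j, i ≠ j →
      ∃ u ∈ Apart i, ∃ v ∈ Apart j, ∃ x ∉ A, ¬ (G.Adj u x ↔ G.Adj v x))
    (B : Fin k → Set V) (hB : ∀ i, B i = {x | x ∉ A ∧ ∃ a ∈ Apart i, G.Adj a x})
    (A' : Set V) (hA' : A' ⊆ A) (hmodA' : IsKModule G k A') :
    IsKModule (gadgetA G A Apart B) k (Sum.inl '' A') :=
  gadgetA_preserves_kmodules_general G A k Apart hcover hmod hmin B A' hA' hmodA'
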